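/- arXiv:1207.4036 — 2 statements merged into one kernel-verified Lean document; each statement's English description precedes it below -/
import Mathlib

section
/- Let H be a subspace of the continuous functions on a compact metric space K with values in ℝ^N, and suppose there is a constant C such that every u ∈ H is Lipschitz with constant C·‖u‖_∞ (i.e., the C¹-norm is controlled by the C⁰-norm on H). If H is closed in the sup-norm, then H is finite-dimensional. -/
/-!
Elements of the closed unit ball of `H` are uniformly bounded, uniformly `C`-Lipschitz maps into a
proper space; as `H` is closed, Arzelà–Ascoli makes that ball compact, and Riesz's theorem then
forces `H` to be finite-dimensional.
-/

open Metric NNReal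

namespace ContinuousMap

variable {K E : Type*} [PseudoMetricSpace K] [CompactSpace K]

theorem isCompact_of_lipschitzWith [PseudoMetricSpace E] {S : Set C(K, E)} (hS : IsClosed S)
    {L : ℝ≥0} (hL : ∀ f ∈ S, LipschitzWith L f) {B : Set E} (hB : IsCompact B)
    (hSB : ∀ f ∈ S, ∀ x, f x ∈ B) : IsCompact S := by
  let e := isometryEquivBoundedOfCompact K E
  refine e.toHomeomorph.isCompact_image.mp <| BoundedContinuousFunction.arzela_ascoli₂ B hB _
    (e.toHomeomorph.isClosedMap S hS) ?_ ?_
  · rintro _ x ⟨f, hf, rfl⟩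
    exact hSB f hf x
  · exact (LipschitzWith.uniformEquicontinuous _ L
      fun ⟨_, f, hf, rfl⟩ ↦ hL f hf).equicontinuous

theorem isCompact_inter_closedBall_of_lipschitzWith [SeminormedAddCommGroup E] [ProperSpace E]
    {S : Set C(K, E)} (hS : IsClosed S) {r : ℝ} {L : ℝ≥0}
    (hL : ∀ f ∈ S, ‖f‖ ≤ r → LipschitzWith L f) : IsCompact (S ∩ closedBall 0 r) := by
  refine isCompact_of_lipschitzWith (hS.inter isClosed_closedBall)
    (fun f hf ↦ hL f hf.1 (mem_closedBall_zero_iff.mp hf.2)) (isCompact_closedBall 0 r) ?_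
  rintro f ⟨-, hf⟩ x
  rw [mem_closedBall_zero_iff] at hf ⊢
  exact (f.norm_coe_le_norm x).trans hf

end ContinuousMap

theorem Submodule.finiteDimensional_of_isCompact_inter_closedBall {𝕜 V : Type*}
    [NontriviallyNormedField 𝕜] [CompleteSpace 𝕜] [NormedAddCommGroup V] [NormedSpace 𝕜 V]
    {H : Submodule 𝕜 V} {r : ℝ} (hr : 0 < r) (hH : IsCompact ((H : Set V) ∩ closedBall 0 r)) :
    FiniteDimensional 𝕜 H := by
  refine .of_isCompact_closedBall₀ 𝕜 hr <| Topology.IsEmbedding.subtypeVal.isCompact_iff.mpr ?_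
  rwa [← Subtype.image_preimage_coe] at hH

/-- A closed subspace `H` of `C(K, ℝ^N)`, `K` compact metric, on which every element
is Lipschitz with constant `C · ‖u‖_∞`, is finite-dimensional. -/
theorem finiteDimensional_of_uniform_lipschitz
    {K : Type*} [MetricSpace K] [CompactSpace K] (N : ℕ)
    (H : Submodule ℝ C(K, EuclideanSpace ℝ (Fin N)))
    (hclosed : IsClosed (H : Set C(K, EuclideanSpace ℝ (Fin N))))
    (C : ℝ) (hC : 0 < C)
    (hLip : ∀ u ∈ H, ∀ x y : K, ‖u x - u y‖ ≤ C * ‖u‖ * dist x y) :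
    FiniteDimensional ℝ H := by
  refine H.finiteDimensional_of_isCompact_inter_closedBall one_pos <|
    ContinuousMap.isCompact_inter_closedBall_of_lipschitzWith hclosed fun u hu hu1 ↦
      LipschitzWith.of_dist_le' (K := C) fun x y ↦ ?_
  calc dist (u x) (u y) = ‖u x - u y‖ := dist_eq_norm _ _
    _ ≤ C * ‖u‖ * dist x y := hLip u hu x y
    _ ≤ C * 1 * dist x y := by gcongr
    _ = C * dist x y := by rw [mul_one]
end

section
/- Let Ω ⊆ ℂ be open and connected, A ⊆ Ω a set with an accumulation point in Ω, and (u_j) a locally uniformly bounded sequence of holomorphic functions on Ω such that lim_{j→∞} u_j(z) exists for every z ∈ A. Then (u_j) converges locally uniformly on Ω to a holomorphic function. (Vitali's theorem.) -/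
/-!
Near an accumulation point `c` of a set on which `u j` converges, the Cauchy estimates bound the
iterated slopes `(dslope · c)^[n] (u j)` uniformly in `j`, so each of them is equicontinuous at `c`.
Induction on `n` then shows that the Taylor coefficients `(dslope · c)^[n] (u j) c` converge, and
with the uniform bound on the Taylor remainder this makes `u j` uniformly Cauchy near `c`. The set
of points having such a neighbourhood is open, contains the given accumulation point, and is
relatively closed in `Ω` by the same argument applied to the set itself; connectedness concludes.
-/

open Filter Metric Topology Set

theorem EquicontinuousAt.cauchySeq_of_mem_closure {ι X α : Type*} [Nonempty ι] [SemilatticeSup ι]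
    [TopologicalSpace X] [PseudoMetricSpace α] {F : ι → X → α} {S : Set X} {x₀ : X}
    (hF : EquicontinuousAt F x₀) (hx₀ : x₀ ∈ closure S)
    (hS : ∀ x ∈ S, CauchySeq fun i => F i x) : CauchySeq fun i => F i x₀ := by
  rw [Metric.cauchySeq_iff]
  intro ε hε
  obtain ⟨x, hx, hxS⟩ := mem_closure_iff_nhds.mp hx₀ _
    (Metric.equicontinuousAt_iff_right.mp hF (ε / 3) (by positivity))
  obtain ⟨N, hN⟩ := Metric.cauchySeq_iff.mp (hS x hxS) (ε / 3) (by positivity)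
  refine ⟨N, fun m hm n hn => ?_⟩
  calc dist (F m x₀) (F n x₀)
        ≤ dist (F m x₀) (F m x) + dist (F m x) (F n x) + dist (F n x) (F n x₀) :=
          dist_triangle4 _ _ _ _
    _ < ε / 3 + ε / 3 + ε / 3 := by
        gcongr
        · exact hx m
        · exact hN m hm n hn
        · rw [dist_comm]; exact hx n
    _ = ε := by ring

theorem isOpen_setOf_exists_nhds_uniformCauchySeqOn {ι X β : Type*} [TopologicalSpace X]
    [UniformSpace β] (F : ι → X → β) (p : Filter ι) :
    IsOpen {x | ∃ t ∈ 𝓝 x, UniformCauchySeqOn F p t} :=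
  isOpen_iff_mem_nhds.mpr fun _ ⟨t, ht, hF⟩ => by
    filter_upwards [eventually_mem_nhds_iff.mpr ht] with y hy using ⟨t, hy, hF⟩

theorem tendstoLocallyUniformlyOn_limUnder {ι X β : Type*} [Nonempty ι] [SemilatticeSup ι]
    [TopologicalSpace X] [UniformSpace β] [CompleteSpace β] [Nonempty β] {F : ι → X → β}
    {s : Set X} (h : ∀ x ∈ s, ∃ t ∈ 𝓝 x, UniformCauchySeqOn F atTop t) :
    TendstoLocallyUniformlyOn F (fun x => limUnder atTop fun i => F i x) atTop s := by
  intro U hU x hx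
  obtain ⟨t, ht, hF⟩ := h x hx
  exact ⟨t, mem_nhdsWithin_of_mem_nhds ht,
    hF.tendstoUniformlyOn_of_tendsto (fun y hy => (hF.cauchySeq hy).tendsto_limUnder) U hU⟩

theorem eq_sum_add_pow_smul_iterate_dslope {𝕜 E : Type*} [NontriviallyNormedField 𝕜]
    [NormedAddCommGroup E] [NormedSpace 𝕜 E] (f : 𝕜 → E) (c z : 𝕜) (N : ℕ) :
    f z = ∑ n ∈ Finset.range N, (z - c) ^ n • (dslope · c)^[n] f c +
      (z - c) ^ N • (dslope · c)^[N] f z := by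
  induction N with
  | zero => simp
  | succ N ih =>
    rw [ih, Finset.sum_range_succ, add_assoc, Function.iterate_succ_apply', pow_succ, mul_smul,
      sub_smul_dslope, smul_sub, add_sub_cancel]

section
variable {E : Type*} [NormedAddCommGroup E] [NormedSpace ℂ E] {c : ℂ} {R M : ℝ}

theorem Complex.norm_dslope_le_of_norm_le {f : ℂ → E} (hf : DifferentiableOn ℂ f (ball c R))
    (hM : ∀ z ∈ ball c R, ‖f z‖ ≤ M) {z : ℂ} (hz : z ∈ ball c R) :
    ‖dslope f c z‖ ≤ 2 * M / R := by
  have hc : c ∈ ball c R := mem_ball_self (pos_of_mem_ball hz)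
  refine Complex.norm_dslope_le_div_of_mapsTo_ball hf (fun w hw => ?_) hz
  rw [mem_closedBall, dist_eq_norm]
  linarith [norm_sub_le (f w) (f c), hM w hw, hM c hc]

theorem Complex.equicontinuousAt_of_norm_le {ι : Type*} {g : ι → ℂ → E}
    (hg : ∀ j, DifferentiableOn ℂ (g j) (ball c R)) (hM : ∀ j, ∀ z ∈ ball c R, ‖g j z‖ ≤ M)
    (hR : 0 < R) : EquicontinuousAt g c := by
  refine equicontinuousAt_of_continuity_modulus (fun z => 2 * M / R * dist z c) ?_ g ?_
  · simpa using
      ((continuous_id.dist continuous_const).tendsto' c 0 (dist_self c)).const_mul (2 * M / R)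
  · filter_upwards [ball_mem_nhds c hR] with z hz j
    rw [dist_comm, dist_eq_norm, ← sub_smul_dslope, norm_smul, mul_comm, ← dist_eq_norm]
    gcongr
    exact Complex.norm_dslope_le_of_norm_le (hg j) (hM j) hz

theorem Complex.cauchySeq_apply_of_mem_closure {ι : Type*} [Nonempty ι] [SemilatticeSup ι]
    {g : ι → ℂ → E} (hg : ∀ j, DifferentiableOn ℂ (g j) (ball c R))
    (hM : ∀ j, ∀ z ∈ ball c R, ‖g j z‖ ≤ M) {S : Set ℂ} (hS : S ⊆ ball c R) (hc : c ∈ closure S)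
    (hconv : ∀ z ∈ S, CauchySeq fun j => g j z) : CauchySeq fun j => g j c := by
  obtain ⟨z, hz⟩ := closure_nonempty_iff.mp ⟨c, hc⟩
  exact (Complex.equicontinuousAt_of_norm_le hg hM
    (pos_of_mem_ball (hS hz))).cauchySeq_of_mem_closure hc hconv

variable [CompleteSpace E]

theorem Complex.differentiableOn_iterate_dslope {f : ℂ → E} {s : Set ℂ} (hs : s ∈ 𝓝 c)
    (hf : DifferentiableOn ℂ f s) (n : ℕ) : DifferentiableOn ℂ ((dslope · c)^[n] f) s := by
  induction n with
  | zero => exact hf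
  | succ n ih =>
    rw [Function.iterate_succ_apply']
    exact (Complex.differentiableOn_dslope hs).mpr ih

theorem Complex.norm_iterate_dslope_le {f : ℂ → E} (hf : DifferentiableOn ℂ f (ball c R))
    (hM : ∀ z ∈ ball c R, ‖f z‖ ≤ M) (n : ℕ) :
    ∀ z ∈ ball c R, ‖(dslope · c)^[n] f z‖ ≤ M * (2 / R) ^ n := by
  induction n with
  | zero => simpa using hM
  | succ n ih =>
    intro z hz
    have hball : ball c R ∈ 𝓝 c := ball_mem_nhds c (pos_of_mem_ball hz)
    rw [Function.iterate_succ_apply']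
    refine (Complex.norm_dslope_le_of_norm_le
      (Complex.differentiableOn_iterate_dslope hball hf n) ih hz).trans_eq ?_
    ring

theorem Complex.cauchySeq_iterate_dslope_apply {ι : Type*} [Nonempty ι] [SemilatticeSup ι]
    {g : ι → ℂ → E} (hg : ∀ j, DifferentiableOn ℂ (g j) (ball c R))
    (hM : ∀ j, ∀ z ∈ ball c R, ‖g j z‖ ≤ M) {S : Set ℂ} (hS : S ⊆ ball c R)
    (hc : c ∈ closure (S \ {c})) (hconv : ∀ z ∈ S, CauchySeq fun j => g j z) (n : ℕ) :
    ∀ z ∈ S \ {c}, CauchySeq fun j => (dslope · c)^[n] (g j) z := by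
  obtain ⟨w, hw⟩ := closure_nonempty_iff.mp ⟨c, hc⟩
  have hball : ball c R ∈ 𝓝 c := ball_mem_nhds c (pos_of_mem_ball (hS hw.1))
  induction n with
  | zero => exact fun z hz => hconv z hz.1
  | succ n ih =>
    have hcenter : CauchySeq fun j => (dslope · c)^[n] (g j) c :=
      Complex.cauchySeq_apply_of_mem_closure
        (fun j => Complex.differentiableOn_iterate_dslope hball (hg j) n)
        (fun j => Complex.norm_iterate_dslope_le (hg j) (hM j) n) (sdiff_subset.trans hS) hc ih
    intro z hz
    simp only [Function.iterate_succ_apply', dslope_of_ne _ hz.2, slope_def_module]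
    exact (uniformContinuous_const_smul _).comp_cauchySeq
      (uniformContinuous_sub.comp_cauchySeq ((ih z hz).prodMk hcenter))

theorem Complex.dist_le_sum_dist_iterate_dslope_add {f₁ f₂ : ℂ → E}
    (hf₁ : DifferentiableOn ℂ f₁ (ball c R)) (hf₂ : DifferentiableOn ℂ f₂ (ball c R))
    (hM₁ : ∀ z ∈ ball c R, ‖f₁ z‖ ≤ M) (hM₂ : ∀ z ∈ ball c R, ‖f₂ z‖ ≤ M) (N : ℕ) {z : ℂ}
    (hz : z ∈ ball c (R / 4)) :
    dist (f₁ z) (f₂ z) ≤ ∑ n ∈ Finset.range N,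
      (R / 4) ^ n * dist ((dslope · c)^[n] f₁ c) ((dslope · c)^[n] f₂ c) +
      2 * M * (1 / 2) ^ N := by
  have hR : 0 < R := by linarith [pos_of_mem_ball hz]
  have hzR : z ∈ ball c R := ball_subset_ball (by linarith) hz
  have hM : 0 ≤ M := (norm_nonneg _).trans (hM₁ z hzR)
  have hzc : ‖z - c‖ ≤ R / 4 := (mem_ball_iff_norm.mp hz).le
  set a := fun n => (dslope · c)^[n] f₁ c
  set b := fun n => (dslope · c)^[n] f₂ c
  have hsplit : f₁ z - f₂ z = ∑ n ∈ Finset.range N, (z - c) ^ n • (a n - b n) +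
      (z - c) ^ N • ((dslope · c)^[N] f₁ z - (dslope · c)^[N] f₂ z) := by
    rw [eq_sum_add_pow_smul_iterate_dslope f₁ c z N, eq_sum_add_pow_smul_iterate_dslope f₂ c z N]
    simp only [smul_sub, Finset.sum_sub_distrib, a, b]
    abel
  rw [dist_eq_norm, hsplit]
  refine (norm_add_le _ _).trans (add_le_add ((norm_sum_le _ _).trans (Finset.sum_le_sum
    fun n _ => ?_)) ?_)
  · rw [norm_smul, norm_pow]
    gcongr
    exact (dist_eq_norm _ _).ge
  · calc ‖(z - c) ^ N • ((dslope · c)^[N] f₁ z - (dslope · c)^[N] f₂ z)‖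
        ≤ (R / 4) ^ N * (M * (2 / R) ^ N + M * (2 / R) ^ N) := by
          rw [norm_smul, norm_pow]
          gcongr
          exact (norm_sub_le _ _).trans (add_le_add
            (Complex.norm_iterate_dslope_le hf₁ hM₁ N z hzR)
            (Complex.norm_iterate_dslope_le hf₂ hM₂ N z hzR))
      _ = 2 * M * (1 / 2) ^ N := by
          have : (R / 4) * (2 / R) = 1 / 2 := by field_simp; norm_num
          rw [← this, mul_pow]
          ring

theorem Complex.uniformCauchySeqOn_ball_of_mem_closure {g : ℕ → ℂ → E}
    (hg : ∀ j, DifferentiableOn ℂ (g j) (ball c R)) (hM : ∀ j, ∀ z ∈ ball c R, ‖g j z‖ ≤ M)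
    {S : Set ℂ} (hS : S ⊆ ball c R) (hc : c ∈ closure (S \ {c}))
    (hconv : ∀ z ∈ S, CauchySeq fun j => g j z) :
    UniformCauchySeqOn g atTop (ball c (R / 4)) := by
  obtain ⟨w, hw⟩ := closure_nonempty_iff.mp ⟨c, hc⟩
  have hball : ball c R ∈ 𝓝 c := ball_mem_nhds c (pos_of_mem_ball (hS hw.1))
  have hcoeff (n : ℕ) : CauchySeq fun j => (dslope · c)^[n] (g j) c :=
    Complex.cauchySeq_apply_of_mem_closure
      (fun j => Complex.differentiableOn_iterate_dslope hball (hg j) n)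
      (fun j => Complex.norm_iterate_dslope_le (hg j) (hM j) n) (sdiff_subset.trans hS) hc
      (Complex.cauchySeq_iterate_dslope_apply hg hM hS hc hconv n)
  rw [Metric.uniformCauchySeqOn_iff]
  intro ε hε
  obtain ⟨N, hN⟩ : ∃ N : ℕ, 2 * M * (1 / 2) ^ N < ε / 2 :=
    (((tendsto_pow_atTop_nhds_zero_of_lt_one (by norm_num) (by norm_num)).const_mul
      (2 * M)).eventually (gt_mem_nhds (by simpa using half_pos hε))).exists
  have hsum : Tendsto (fun p : ℕ × ℕ => ∑ n ∈ Finset.range N,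
      (R / 4) ^ n * dist ((dslope · c)^[n] (g p.1) c) ((dslope · c)^[n] (g p.2) c))
      atTop (𝓝 0) := by
    simpa using tendsto_finsetSum _ fun n _ =>
      (cauchySeq_iff_tendsto_dist_atTop_0.mp (hcoeff n)).const_mul ((R / 4) ^ n)
  obtain ⟨J, hJ⟩ := eventually_atTop_prod_self'.mp (hsum.eventually (gt_mem_nhds (half_pos hε)))
  refine ⟨J, fun m hm k hk z hz => ?_⟩
  linarith [hJ m hm k hk,
    Complex.dist_le_sum_dist_iterate_dslope_add (hg m) (hg k) (hM m) (hM k) N hz]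
end

theorem Complex.exists_nhds_uniformCauchySeqOn_of_mem_closure {E : Type*} [NormedAddCommGroup E]
    [NormedSpace ℂ E] [CompleteSpace E] {Ω : Set ℂ} (hΩ : IsOpen Ω) {u : ℕ → ℂ → E}
    (hu : ∀ j, DifferentiableOn ℂ (u j) Ω)
    (hbd : ∀ K ⊆ Ω, IsCompact K → ∃ M : ℝ, ∀ j, ∀ z ∈ K, ‖u j z‖ ≤ M) {S : Set ℂ}
    (hS : ∀ z ∈ S, CauchySeq fun j => u j z) {c : ℂ} (hcΩ : c ∈ Ω) (hc : c ∈ closure (S \ {c})) :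
    ∃ t ∈ 𝓝 c, UniformCauchySeqOn u atTop t := by
  obtain ⟨R, hR, hRΩ⟩ := nhds_basis_closedBall.mem_iff.mp (hΩ.mem_nhds hcΩ)
  obtain ⟨M, hM⟩ := hbd _ hRΩ (isCompact_closedBall c R)
  have hcR : c ∈ closure ((S ∩ ball c R) \ {c}) := by
    rw [inter_sdiff_right_comm, mem_closure_iff_nhdsWithin_neBot,
      ← nhdsWithin_restrict' _ (ball_mem_nhds c hR)]
    exact mem_closure_iff_nhdsWithin_neBot.mp hc
  refine ⟨ball c (R / 4), ball_mem_nhds c (by positivity), ?_⟩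
  exact Complex.uniformCauchySeqOn_ball_of_mem_closure
    (fun j => (hu j).mono (ball_subset_closedBall.trans hRΩ))
    (fun j z hz => hM j z (ball_subset_closedBall hz)) inter_subset_right hcR
    (fun z hz => hS z hz.1)

theorem vitali_general
    (Ω : Set ℂ) (hΩ : IsOpen Ω) (hconn : IsConnected Ω)
    (u : ℕ → ℂ → ℂ) (hu : ∀ j, DifferentiableOn ℂ (u j) Ω)
    (A : Set ℂ)
    (hacc : ∃ z₀ ∈ Ω, z₀ ∈ closure (A \ {z₀}))
    (hbd : ∀ K ⊆ Ω, IsCompact K → ∃ M : ℝ, ∀ j, ∀ z ∈ K, ‖u j z‖ ≤ M)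
    (hptwise : ∀ z ∈ A, ∃ l : ℂ, Tendsto (fun j => u j z) atTop (nhds l)) :
    ∃ f : ℂ → ℂ, DifferentiableOn ℂ f Ω ∧
      TendstoLocallyUniformlyOn u f atTop Ω := by
  obtain ⟨z₀, hz₀Ω, hz₀A⟩ := hacc
  set T := {c | ∃ t ∈ 𝓝 c, UniformCauchySeqOn u atTop t}
  have hTcauchy : ∀ c ∈ T, CauchySeq fun j => u j c :=
    fun _ ⟨_, ht, hUC⟩ => hUC.cauchySeq (mem_of_mem_nhds ht)
  have hAcauchy : ∀ z ∈ A, CauchySeq fun j => u j z :=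
    fun z hz => (hptwise z hz).choose_spec.cauchySeq
  have hz₀T : z₀ ∈ T :=
    Complex.exists_nhds_uniformCauchySeqOn_of_mem_closure hΩ hu hbd hAcauchy hz₀Ω hz₀A
  have hΩT : Ω ⊆ T := by
    refine hconn.isPreconnected.subset_of_closure_inter_subset
      (isOpen_setOf_exists_nhds_uniformCauchySeqOn u atTop) ⟨z₀, hz₀Ω, hz₀T⟩ ?_
    rintro c ⟨hcT, hcΩ⟩
    by_contra hc
    exact hc (Complex.exists_nhds_uniformCauchySeqOn_of_mem_closure hΩ hu hbd hTcauchy hcΩ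
      (by rwa [sdiff_singleton_eq_self hc]))
  have hlim := tendstoLocallyUniformlyOn_limUnder fun _ hc => hΩT hc
  exact ⟨_, hlim.differentiableOn (Eventually.of_forall hu) hΩ, hlim⟩

/-- Vitali's theorem: a locally uniformly bounded sequence of holomorphic functions on a
connected open set `Ω ⊆ ℂ` which converges pointwise on a set `A ⊆ Ω` having an accumulation
point in `Ω` converges locally uniformly on `Ω` to a holomorphic function. -/
theorem vitali
    (Ω : Set ℂ) (hΩ : IsOpen Ω) (hconn : IsConnected Ω)
    (u : ℕ → ℂ → ℂ) (hu : ∀ j, DifferentiableOn ℂ (u j) Ω)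
    (A : Set ℂ) (hAΩ : A ⊆ Ω)
    (hacc : ∃ z₀ ∈ Ω, z₀ ∈ closure (A \ {z₀}))
    (hbd : ∀ K ⊆ Ω, IsCompact K → ∃ M : ℝ, ∀ j, ∀ z ∈ K, ‖u j z‖ ≤ M)
    (hptwise : ∀ z ∈ A, ∃ l : ℂ, Tendsto (fun j => u j z) atTop (nhds l)) :
    ∃ f : ℂ → ℂ, DifferentiableOn ℂ f Ω ∧
      TendstoLocallyUniformlyOn u f atTop Ω :=
  vitali_general Ω hΩ hconn u hu A hacc hbd hptwise
end
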